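/- arXiv:0903.2531 — 6 statements merged into one kernel-verified Lean document; each statement's English description precedes it below -/
import Mathlib

section
/- Let C ⊆ ℝ² and T : C → C be as in the John construction (T = I₂∘I₁ with I₁ fixing x-coordinates and I₂ fixing y-coordinates). Suppose f, g : ℝ → ℝ are continuous, f(x) + g(y) = 0 on C, and there exists a point P ∈ C whose orbit {TⁿP : n ∈ ℤ} is dense in C. Then f is constant on the projection of C to the x-axis and g is constant on the projection of C to the y-axis. -/
/-!
The function `q ↦ f q.1` on `C` is invariant under `I₁`, which preserves `x`, and under `I₂`,
because on `C` it equals `q ↦ -g q.2` and `I₂` preserves `y`. Hence it is invariant under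
`T = I₂ ∘ I₁` and constant along the orbit of `P`; being continuous and the orbit being dense,
it is constant on `C`, and so is `q ↦ g q.2 = -f q.1`.
-/

namespace Equiv.Perm

theorem comp_zpow_eq_of_comp_eq {α β : Type*} {T : Perm α} {φ : α → β} (h : φ ∘ T = φ) :
    ∀ n : ℤ, φ ∘ ⇑(T ^ n) = φ := by
  intro n
  induction n using Int.induction_on with
  | zero => rfl
  | succ k ih => rw [zpow_add_one, coe_mul, ← Function.comp_assoc, ih, h]
  | pred k ih =>
    rw [zpow_sub_one, coe_mul, ← Function.comp_assoc, ih]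
    conv_lhs => rw [← h]
    rw [Function.comp_assoc, ← coe_mul, mul_inv_cancel, coe_one, Function.comp_id]

end Equiv.Perm

theorem Continuous.eq_of_comp_eq_of_denseRange_zpow {X Y : Type*} [TopologicalSpace X]
    [TopologicalSpace Y] [T2Space Y] {φ : X → Y} (hφ : Continuous φ) {T : Equiv.Perm X}
    (hT : φ ∘ T = φ) {x₀ : X} (hdense : DenseRange fun n : ℤ => (T ^ n) x₀) (x : X) :
    φ x = φ x₀ := by
  refine congrFun (hφ.ext_on hdense continuous_const ?_) x
  rintro _ ⟨n, rfl⟩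
  exact congrFun (Equiv.Perm.comp_zpow_eq_of_comp_eq hT n) x₀

theorem john_dense_orbit_constancy_general (C : Set (ℝ × ℝ)) (I₁ I₂ : Equiv.Perm C)
    (h1 : ∀ P : C, ((I₁ P : ℝ × ℝ)).1 = (P : ℝ × ℝ).1)
    (h2 : ∀ P : C, ((I₂ P : ℝ × ℝ)).2 = (P : ℝ × ℝ).2)
    (f g : ℝ → ℝ) (hf : Continuous f)
    (hfg : ∀ p ∈ C, f p.1 + g p.2 = 0)
    (P : C) (hdense : Dense (Set.range fun n : ℤ => ((I₂ * I₁) ^ n) P)) :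
    (∀ p ∈ C, ∀ q ∈ C, f p.1 = f q.1) ∧ (∀ p ∈ C, ∀ q ∈ C, g p.2 = g q.2) := by
  set φ : C → ℝ := fun q => f (q : ℝ × ℝ).1
  have hI₁ : φ ∘ I₁ = φ := funext fun q => congrArg f (h1 q)
  have hI₂ : φ ∘ I₂ = φ := funext fun q => by
    have hI₂q := hfg _ (I₂ q).2
    have hq := hfg _ q.2
    rw [h2] at hI₂q
    simp only [φ, Function.comp_apply]
    linarith
  have hT : φ ∘ ⇑(I₂ * I₁) = φ := by rw [Equiv.Perm.coe_mul, ← Function.comp_assoc, hI₂, hI₁]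
  have hφ : Continuous φ := hf.comp (continuous_fst.comp continuous_subtype_val)
  have hconst : ∀ p (hp : p ∈ C), f p.1 = φ P := fun p hp =>
    hφ.eq_of_comp_eq_of_denseRange_zpow hT hdense ⟨p, hp⟩
  refine ⟨fun p hp q hq => (hconst p hp).trans (hconst q hq).symm, fun p hp q hq => ?_⟩
  linarith [hfg p hp, hfg q hq, hconst p hp, hconst q hq]

/-- If the John mapping `T = I₂ ∘ I₁` (built from coordinate-preserving
involutions) has a point `P ∈ C` with dense orbit `{TⁿP : n ∈ ℤ}`, and
continuous functions `f, g` satisfy `f(x) + g(y) = 0` on `C`, then `f` is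
constant on the projection of `C` to the `x`-axis and `g` on the projection
to the `y`-axis. -/
theorem john_dense_orbit_constancy (C : Set (ℝ × ℝ)) (I₁ I₂ : Equiv.Perm C)
    (h1 : ∀ P : C, ((I₁ P : ℝ × ℝ)).1 = (P : ℝ × ℝ).1)
    (h2 : ∀ P : C, ((I₂ P : ℝ × ℝ)).2 = (P : ℝ × ℝ).2)
    (f g : ℝ → ℝ) (hf : Continuous f) (hg : Continuous g)
    (hfg : ∀ p ∈ C, f p.1 + g p.2 = 0)
    (P : C) (hdense : Dense (Set.range fun n : ℤ => ((I₂ * I₁) ^ n) P)) :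
    (∀ p ∈ C, ∀ q ∈ C, f p.1 = f q.1) ∧ (∀ p ∈ C, ∀ q ∈ C, g p.2 = g q.2) :=
  john_dense_orbit_constancy_general C I₁ I₂ h1 h2 f g hf hfg P hdense
end

section
/- Let b : ℝ → ℝ³ be a smooth vector function and suppose r : ℝ → ℝ³ is a smooth solution of the differential equation r × r' = b (cross product in ℝ³). If at some point t the scalar triple product (b(t), b'(t), b''(t)) is strictly negative, then no smooth solution r exists in a neighborhood of t; more precisely, any smooth r satisfying r × r' = b on an interval forces (b, b', b'') ≥ 0 wherever b × b' ≠ 0. -/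
open Matrix Set

/-- If a smooth `r` solves `r × r' = b` on an interval, then the scalar triple
product `(b, b', b'')` is nonnegative wherever `b × b' ≠ 0`; in particular a
smooth solution cannot exist near a point where `(b, b', b'') < 0`. -/
theorem cross_product_ode_triple_nonneg (a b : ℝ) (bvec r : ℝ → Fin 3 → ℝ)
    (hb : ContDiff ℝ (⊤ : ℕ∞) bvec) (hr : ContDiff ℝ (⊤ : ℕ∞) r)
    (heq : ∀ t ∈ Ioo a b, crossProduct (r t) (deriv r t) = bvec t) :
    ∀ t ∈ Ioo a b, crossProduct (bvec t) (deriv bvec t) ≠ 0 →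
      0 ≤ bvec t ⬝ᵥ crossProduct (deriv bvec t) (deriv (deriv bvec) t) := by
  intro t ht _
  have hFc : ∀ i, ContDiff ℝ (⊤ : ℕ∞) (fun s => r s i) := fun i => (contDiff_pi.mp (hr.of_le (by simp)) i)
  have hBc : ∀ i, ContDiff ℝ (⊤ : ℕ∞) (fun s => bvec s i) := fun i => (contDiff_pi.mp (hb.of_le (by simp)) i)
  set x : ℝ → ℝ := fun s => r s 0 with hxd
  set y : ℝ → ℝ := fun s => r s 1 with hyd
  set z : ℝ → ℝ := fun s => r s 2 with hzd
  have hx : ContDiff ℝ (⊤ : ℕ∞) x := hFc 0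
  have hy : ContDiff ℝ (⊤ : ℕ∞) y := hFc 1
  have hz : ContDiff ℝ (⊤ : ℕ∞) z := hFc 2
  have hx1 : ContDiff ℝ (⊤ : ℕ∞) (deriv x) := (contDiff_infty_iff_deriv.mp hx).2
  have hy1 : ContDiff ℝ (⊤ : ℕ∞) (deriv y) := (contDiff_infty_iff_deriv.mp hy).2
  have hz1 : ContDiff ℝ (⊤ : ℕ∞) (deriv z) := (contDiff_infty_iff_deriv.mp hz).2
  have hx2 : ContDiff ℝ (⊤ : ℕ∞) (deriv (deriv x)) := (contDiff_infty_iff_deriv.mp hx1).2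
  have hy2 : ContDiff ℝ (⊤ : ℕ∞) (deriv (deriv y)) := (contDiff_infty_iff_deriv.mp hy1).2
  have hz2 : ContDiff ℝ (⊤ : ℕ∞) (deriv (deriv z)) := (contDiff_infty_iff_deriv.mp hz1).2
  have HD : ∀ f : ℝ → ℝ, ContDiff ℝ (⊤ : ℕ∞) f → ∀ s : ℝ, HasDerivAt f (deriv f s) s :=
    fun f hf s => (hf.differentiable (by simp) s).hasDerivAt
  -- components of bvec on Ioo a b
  have hdr : ∀ s : ℝ, deriv r s = fun i => deriv (fun u => r u i) s :=
    fun s => deriv_pi fun i => ((hFc i).differentiable (by simp) s)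
  have hb0 : ∀ s ∈ Ioo a b, bvec s 0 = y s * deriv z s - z s * deriv y s := by
    intro s hs
    rw [← heq s hs, cross_apply, hdr s]
    simp [hxd, hyd, hzd]
  have hb1 : ∀ s ∈ Ioo a b, bvec s 1 = z s * deriv x s - x s * deriv z s := by
    intro s hs
    rw [← heq s hs, cross_apply, hdr s]
    simp [hxd, hyd, hzd]
  have hb2 : ∀ s ∈ Ioo a b, bvec s 2 = x s * deriv y s - y s * deriv x s := by
    intro s hs
    rw [← heq s hs, cross_apply, hdr s]
    simp [hxd, hyd, hzd]
  -- first derivatives of components of bvec on Ioo a b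
  have hder : ∀ (f g f' g' : ℝ → ℝ), ContDiff ℝ (⊤ : ℕ∞) f → ContDiff ℝ (⊤ : ℕ∞) g →
      ContDiff ℝ (⊤ : ℕ∞) f' → ContDiff ℝ (⊤ : ℕ∞) g' →
      ∀ s ∈ Ioo a b,
      (∀ u ∈ Ioo a b, (fun v => bvec v 0) u = (fun u => f u * deriv g u - g u * deriv f u) u) →
      True := fun _ _ _ _ _ _ _ _ _ _ _ => trivial
  have hdb0 : ∀ s ∈ Ioo a b,
      deriv (fun u => bvec u 0) s = y s * deriv (deriv z) s - z s * deriv (deriv y) s := by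
    intro s hs
    have hev : (fun u => bvec u 0) =ᶠ[nhds s] fun u => y u * deriv z u - z u * deriv y u :=
      Filter.eventuallyEq_of_mem (Ioo_mem_nhds hs.1 hs.2) (fun u hu => hb0 u hu)
    rw [hev.deriv_eq]
    have h1 : HasDerivAt (fun u => y u * deriv z u - z u * deriv y u)
        (deriv y s * deriv z s + y s * deriv (deriv z) s -
          (deriv z s * deriv y s + z s * deriv (deriv y) s)) s :=
      ((HD y hy s).mul (HD _ hz1 s)).sub ((HD z hz s).mul (HD _ hy1 s))
    rw [h1.deriv]; ring
  have hdb1 : ∀ s ∈ Ioo a b,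
      deriv (fun u => bvec u 1) s = z s * deriv (deriv x) s - x s * deriv (deriv z) s := by
    intro s hs
    have hev : (fun u => bvec u 1) =ᶠ[nhds s] fun u => z u * deriv x u - x u * deriv z u :=
      Filter.eventuallyEq_of_mem (Ioo_mem_nhds hs.1 hs.2) (fun u hu => hb1 u hu)
    rw [hev.deriv_eq]
    have h1 : HasDerivAt (fun u => z u * deriv x u - x u * deriv z u)
        (deriv z s * deriv x s + z s * deriv (deriv x) s -
          (deriv x s * deriv z s + x s * deriv (deriv z) s)) s :=
      ((HD z hz s).mul (HD _ hx1 s)).sub ((HD x hx s).mul (HD _ hz1 s))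
    rw [h1.deriv]; ring
  have hdb2 : ∀ s ∈ Ioo a b,
      deriv (fun u => bvec u 2) s = x s * deriv (deriv y) s - y s * deriv (deriv x) s := by
    intro s hs
    have hev : (fun u => bvec u 2) =ᶠ[nhds s] fun u => x u * deriv y u - y u * deriv x u :=
      Filter.eventuallyEq_of_mem (Ioo_mem_nhds hs.1 hs.2) (fun u hu => hb2 u hu)
    rw [hev.deriv_eq]
    have h1 : HasDerivAt (fun u => x u * deriv y u - y u * deriv x u)
        (deriv x s * deriv y s + x s * deriv (deriv y) s -
          (deriv y s * deriv x s + y s * deriv (deriv x) s)) s :=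
      ((HD x hx s).mul (HD _ hy1 s)).sub ((HD y hy s).mul (HD _ hx1 s))
    rw [h1.deriv]; ring
  -- deriv bvec componentwise
  have hswap : ∀ i, (fun u => deriv bvec u i) = (fun u => deriv (fun v => bvec v i) u) := by
    intro i; funext u
    exact congrFun (deriv_pi fun j => ((hBc j).differentiable (by simp) u)) i
  have hdbc : ∀ i, ContDiff ℝ (⊤ : ℕ∞) (fun u => deriv bvec u i) := by
    intro i; rw [hswap i]; exact (contDiff_infty_iff_deriv.mp (hBc i)).2
  have hdb : deriv bvec t = fun i => deriv (fun u => bvec u i) t :=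
    deriv_pi fun i => ((hBc i).differentiable (by simp) t)
  have hddb : deriv (deriv bvec) t = fun i => deriv (fun u => deriv bvec u i) t :=
    deriv_pi fun i => ((hdbc i).differentiable (by simp) t)
  -- second derivatives of components of bvec at t
  have hddb0 : deriv (fun u => deriv bvec u 0) t =
      deriv y t * deriv (deriv z) t + y t * deriv (deriv (deriv z)) t -
        (deriv z t * deriv (deriv y) t + z t * deriv (deriv (deriv y)) t) := by
    rw [hswap 0]
    have hev : (fun u => deriv (fun v => bvec v 0) u) =ᶠ[nhds t]
        fun u => y u * deriv (deriv z) u - z u * deriv (deriv y) u :=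
      Filter.eventuallyEq_of_mem (Ioo_mem_nhds ht.1 ht.2) (fun u hu => hdb0 u hu)
    rw [hev.deriv_eq]
    exact (((HD y hy t).mul (HD _ hz2 t)).sub ((HD z hz t).mul (HD _ hy2 t))).deriv
  have hddb1 : deriv (fun u => deriv bvec u 1) t =
      deriv z t * deriv (deriv x) t + z t * deriv (deriv (deriv x)) t -
        (deriv x t * deriv (deriv z) t + x t * deriv (deriv (deriv z)) t) := by
    rw [hswap 1]
    have hev : (fun u => deriv (fun v => bvec v 1) u) =ᶠ[nhds t]
        fun u => z u * deriv (deriv x) u - x u * deriv (deriv z) u :=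
      Filter.eventuallyEq_of_mem (Ioo_mem_nhds ht.1 ht.2) (fun u hu => hdb1 u hu)
    rw [hev.deriv_eq]
    exact (((HD z hz t).mul (HD _ hx2 t)).sub ((HD x hx t).mul (HD _ hz2 t))).deriv
  have hddb2 : deriv (fun u => deriv bvec u 2) t =
      deriv x t * deriv (deriv y) t + x t * deriv (deriv (deriv y)) t -
        (deriv y t * deriv (deriv x) t + y t * deriv (deriv (deriv x)) t) := by
    rw [hswap 2]
    have hev : (fun u => deriv (fun v => bvec v 2) u) =ᶠ[nhds t]
        fun u => x u * deriv (deriv y) u - y u * deriv (deriv x) u :=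
      Filter.eventuallyEq_of_mem (Ioo_mem_nhds ht.1 ht.2) (fun u hu => hdb2 u hu)
    rw [hev.deriv_eq]
    exact (((HD x hx t).mul (HD _ hy2 t)).sub ((HD y hy t).mul (HD _ hx2 t))).deriv
  -- assemble
  rw [cross_apply, hdb, hddb]
  simp only [dotProduct, Fin.sum_univ_three, Matrix.cons_val_zero, Matrix.cons_val_one,
    Matrix.head_cons, Matrix.cons_val_two, Matrix.tail_cons]
  rw [hb0 t ht, hb1 t ht, hb2 t ht, hdb0 t ht, hdb1 t ht, hdb2 t ht, hddb0, hddb1, hddb2]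
  nlinarith [sq_nonneg (x t * (deriv y t * deriv (deriv z) t - deriv z t * deriv (deriv y) t)
      - y t * (deriv x t * deriv (deriv z) t - deriv z t * deriv (deriv x) t)
      + z t * (deriv x t * deriv (deriv y) t - deriv y t * deriv (deriv x) t))]
end

section
/- Let b : ℝ → ℝ³ be smooth with b(t) × b'(t) ≠ 0 and (b(t), b'(t), b''(t)) > 0 on an interval. Then r(t) = (b(t), b'(t), b''(t))^{-1/2} · (b(t) × b'(t)) satisfies r × r' = b on that interval, and any smooth solution of r × r' = b on that interval equals ± this formula. -/
open Matrix Set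

set_option linter.unnecessarySeqFocus false

lemma cross_cross_cross (u v w : Fin 3 → ℝ) :
    crossProduct (crossProduct u v) (crossProduct u w) = (u ⬝ᵥ crossProduct v w) • u := by
  funext i
  fin_cases i <;>
    simp [crossProduct, dotProduct, Fin.sum_univ_succ] <;> ring

lemma triple_key (u v w x : Fin 3 → ℝ) :
    (crossProduct u v) ⬝ᵥ crossProduct (crossProduct u w) (crossProduct v w + crossProduct u x)
      = (u ⬝ᵥ crossProduct v w) ^ 2 := by
  simp [crossProduct, dotProduct, Fin.sum_univ_succ]
  ring

lemma hasDerivAt_cross {f g : ℝ → Fin 3 → ℝ} {f' g' : Fin 3 → ℝ} {t : ℝ}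
    (hf : HasDerivAt f f' t) (hg : HasDerivAt g g' t) :
    HasDerivAt (fun s => crossProduct (f s) (g s))
      (crossProduct f' (g t) + crossProduct (f t) g') t := by
  rw [hasDerivAt_pi] at hf hg ⊢
  intro i
  fin_cases i <;>
  · simp only [crossProduct, LinearMap.mk₂_apply, Matrix.cons_val_zero, Matrix.cons_val_one,
      Matrix.head_cons, Pi.add_apply, Matrix.cons_val_two, Matrix.tail_cons]
    refine (((hf _).fun_mul (hg _)).fun_sub ((hf _).fun_mul (hg _))).congr_deriv ?_ <;>
    · simp
      ring

lemma hasDerivAt_dot {f g : ℝ → Fin 3 → ℝ} {f' g' : Fin 3 → ℝ} {t : ℝ}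
    (hf : HasDerivAt f f' t) (hg : HasDerivAt g g' t) :
    HasDerivAt (fun s => f s ⬝ᵥ g s) (f' ⬝ᵥ g t + f t ⬝ᵥ g') t := by
  rw [hasDerivAt_pi] at hf hg
  simp only [dotProduct, Fin.sum_univ_three]
  refine ((((hf 0).fun_mul (hg 0)).fun_add ((hf 1).fun_mul (hg 1))).fun_add ((hf 2).fun_mul (hg 2))).congr_deriv ?_
  ring

/-- The candidate solution `r = (b,b',b'')^{-1/2} · (b × b')` of `r × r' = b`. -/
noncomputable def crossODESol (bvec : ℝ → Fin 3 → ℝ) : ℝ → Fin 3 → ℝ := fun t =>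
  ((bvec t ⬝ᵥ crossProduct (deriv bvec t) (deriv (deriv bvec) t)) ^ (-(1 : ℝ) / 2)) •
    crossProduct (bvec t) (deriv bvec t)

/-- If `b × b' ≠ 0` and the scalar triple product `(b, b', b'') > 0` on an
interval, then `r = (b,b',b'')^{-1/2} (b × b')` solves `r × r' = b` there, and
any smooth solution equals `±` this formula on the interval. -/
theorem cross_product_ode_solution (a b : ℝ) (bvec : ℝ → Fin 3 → ℝ)
    (hb : ContDiff ℝ (⊤ : ℕ∞) bvec)
    (hne : ∀ t ∈ Ioo a b, crossProduct (bvec t) (deriv bvec t) ≠ 0)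
    (hpos : ∀ t ∈ Ioo a b,
      0 < bvec t ⬝ᵥ crossProduct (deriv bvec t) (deriv (deriv bvec) t)) :
    (∀ t ∈ Ioo a b,
      crossProduct (crossODESol bvec t) (deriv (crossODESol bvec) t) = bvec t) ∧
    ∀ r : ℝ → Fin 3 → ℝ, ContDiff ℝ (⊤ : ℕ∞) r →
      (∀ t ∈ Ioo a b, crossProduct (r t) (deriv r t) = bvec t) →
      (∀ t ∈ Ioo a b, r t = crossODESol bvec t) ∨
      (∀ t ∈ Ioo a b, r t = -crossODESol bvec t) := by
  replace hb : ContDiff ℝ (⊤:ℕ∞) bvec := hb.of_le (by simp)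
  have hb1 : ContDiff ℝ (⊤:ℕ∞) (deriv bvec) := (contDiff_infty_iff_deriv.mp hb).2
  have hb2 : ContDiff ℝ (⊤:ℕ∞) (deriv (deriv bvec)) := (contDiff_infty_iff_deriv.mp hb1).2
  set T : ℝ → ℝ := fun s =>
    bvec s ⬝ᵥ crossProduct (deriv bvec s) (deriv (deriv bvec) s) with hTdef
  constructor
  · intro t ht
    have hT : 0 < T t := hpos t ht
    have h0 : HasDerivAt bvec (deriv bvec t) t :=
      (hb.differentiable (by simp) t).hasDerivAt
    have h1 : HasDerivAt (deriv bvec) (deriv (deriv bvec) t) t :=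
      (hb1.differentiable (by simp) t).hasDerivAt
    have h2 : HasDerivAt (deriv (deriv bvec)) (deriv (deriv (deriv bvec)) t) t :=
      (hb2.differentiable (by simp) t).hasDerivAt
    have hw : HasDerivAt (fun s => crossProduct (bvec s) (deriv bvec s))
        (crossProduct (bvec t) (deriv (deriv bvec) t)) t := by
      have := hasDerivAt_cross h0 h1
      rwa [cross_self, zero_add] at this
    have hT' : HasDerivAt T
        (deriv bvec t ⬝ᵥ crossProduct (deriv bvec t) (deriv (deriv bvec) t) +
          bvec t ⬝ᵥ (crossProduct (deriv (deriv bvec) t) (deriv (deriv bvec) t) +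
            crossProduct (deriv bvec t) (deriv (deriv (deriv bvec)) t))) t :=
      hasDerivAt_dot h0 (hasDerivAt_cross h1 h2)
    set Td := deriv bvec t ⬝ᵥ crossProduct (deriv bvec t) (deriv (deriv bvec) t) +
          bvec t ⬝ᵥ (crossProduct (deriv (deriv bvec) t) (deriv (deriv bvec) t) +
            crossProduct (deriv bvec t) (deriv (deriv (deriv bvec)) t))
    have hc : HasDerivAt (fun s => T s ^ (-(1:ℝ)/2))
        (Td * (-(1:ℝ)/2) * T t ^ ((-(1:ℝ)/2) - 1)) t :=
      hT'.rpow_const (Or.inl hT.ne')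
    have hR : HasDerivAt (crossODESol bvec)
        ((T t ^ (-(1:ℝ)/2)) • crossProduct (bvec t) (deriv (deriv bvec) t) +
          (Td * (-(1:ℝ)/2) * T t ^ ((-(1:ℝ)/2) - 1)) • crossProduct (bvec t) (deriv bvec t)) t := by
      unfold crossODESol
      exact hc.smul hw
    rw [hR.deriv]
    show crossProduct ((T t ^ (-(1:ℝ)/2)) • crossProduct (bvec t) (deriv bvec t)) _ = _
    have hcc : (T t ^ (-(1:ℝ)/2)) * ((T t ^ (-(1:ℝ)/2)) * T t) = 1 := by
      rw [← mul_assoc, ← Real.rpow_add hT]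
      norm_num
      rw [Real.rpow_neg_one]
      exact inv_mul_cancel₀ hT.ne'
    simp only [_root_.map_smul, LinearMap.smul_apply, map_add, LinearMap.map_smul,
      cross_self, smul_zero, zero_add, add_zero, cross_cross_cross, smul_add]
    show (T t ^ (-(1:ℝ)/2)) • (T t ^ (-(1:ℝ)/2)) • (T t) • bvec t = bvec t
    rw [smul_smul, smul_smul, mul_assoc, hcc, one_smul]
  · intro r hr hsol
    replace hr : ContDiff ℝ (⊤:ℕ∞) r := hr.of_le (by simp)
    have hr1 : ContDiff ℝ (⊤:ℕ∞) (deriv r) := (contDiff_infty_iff_deriv.mp hr).2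
    have hr2 : ContDiff ℝ (⊤:ℕ∞) (deriv (deriv r)) := (contDiff_infty_iff_deriv.mp hr1).2
    have H0 : ∀ s, HasDerivAt r (deriv r s) s := fun s =>
      (hr.differentiable (by simp) s).hasDerivAt
    have H1 : ∀ s, HasDerivAt (deriv r) (deriv (deriv r) s) s := fun s =>
      (hr1.differentiable (by simp) s).hasDerivAt
    have H2 : ∀ s, HasDerivAt (deriv (deriv r)) (deriv (deriv (deriv r)) s) s := fun s =>
      (hr2.differentiable (by simp) s).hasDerivAt
    set σ : ℝ → ℝ := fun s => r s ⬝ᵥ crossProduct (deriv r s) (deriv (deriv r) s) with hσdef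
    -- step A
    have hA : ∀ t ∈ Ioo a b, deriv bvec t = crossProduct (r t) (deriv (deriv r) t) := by
      intro t ht
      have heq : bvec =ᶠ[nhds t] fun s => crossProduct (r s) (deriv r s) :=
        Filter.eventually_of_mem (isOpen_Ioo.mem_nhds ht) (fun s hs => (hsol s hs).symm)
      rw [heq.deriv_eq]
      have := (hasDerivAt_cross (H0 t) (H1 t)).deriv
      rwa [cross_self, zero_add] at this
    -- step B
    have hB : ∀ t ∈ Ioo a b, deriv (deriv bvec) t =
        crossProduct (deriv r t) (deriv (deriv r) t) +
          crossProduct (r t) (deriv (deriv (deriv r)) t) := by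
      intro t ht
      have heq : deriv bvec =ᶠ[nhds t] fun s => crossProduct (r s) (deriv (deriv r) s) :=
        Filter.eventually_of_mem (isOpen_Ioo.mem_nhds ht) (fun s hs => hA s hs)
      rw [heq.deriv_eq]
      exact (hasDerivAt_cross (H0 t) (H2 t)).deriv
    -- step C : T = σ^2 on Ioo
    have hC : ∀ t ∈ Ioo a b, T t = σ t ^ 2 := by
      intro t ht
      rw [hTdef]
      simp only
      rw [← hsol t ht, hA t ht, hB t ht]
      exact triple_key (r t) (deriv r t) (deriv (deriv r) t) (deriv (deriv (deriv r)) t)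
    -- step D : b ×₃ b' = σ • r on Ioo
    have hD : ∀ t ∈ Ioo a b,
        crossProduct (bvec t) (deriv bvec t) = σ t • r t := by
      intro t ht
      rw [← hsol t ht, hA t ht]
      exact cross_cross_cross (r t) (deriv r t) (deriv (deriv r) t)
    -- step E : σ ≠ 0 on Ioo
    have hE : ∀ t ∈ Ioo a b, σ t ≠ 0 := by
      intro t ht h
      have := hpos t ht
      rw [show (bvec t ⬝ᵥ crossProduct (deriv bvec t) (deriv (deriv bvec) t)) = T t from rfl,
        hC t ht, h] at this
      simp at this
    -- step F : σ continuous
    have hF : Continuous σ := by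
      rw [continuous_iff_continuousAt]
      intro s
      exact (hasDerivAt_dot (H0 s) (hasDerivAt_cross (H1 s) (H2 s))).differentiableAt.continuousAt
    -- step G : constant sign
    have hG : (∀ t ∈ Ioo a b, 0 < σ t) ∨ (∀ t ∈ Ioo a b, σ t < 0) := by
      by_cases hall : ∀ t ∈ Ioo a b, 0 < σ t
      · exact Or.inl hall
      · right
        push_neg at hall
        obtain ⟨t₀, ht₀, ht₀'⟩ := hall
        have hneg : σ t₀ < 0 := lt_of_le_of_ne ht₀' (hE t₀ ht₀)
        intro t₁ ht₁
        by_contra hpos'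
        push_neg at hpos'
        have hpos₁ : 0 < σ t₁ := lt_of_le_of_ne hpos' (Ne.symm (hE t₁ ht₁))
        have hsub : uIcc t₀ t₁ ⊆ Ioo a b := ordConnected_Ioo.uIcc_subset ht₀ ht₁
        have := intermediate_value_uIcc (hF.continuousOn (s := uIcc t₀ t₁))
        have h0mem : (0:ℝ) ∈ uIcc (σ t₀) (σ t₁) := by
          rw [Set.mem_uIcc]
          exact Or.inl ⟨hneg.le, hpos₁.le⟩
        obtain ⟨c, hc, hc0⟩ := this h0mem
        exact hE c (hsub hc) hc0
    -- final : express r in terms of crossODESol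
    have key : ∀ t ∈ Ioo a b, crossODESol bvec t = (T t ^ (-(1:ℝ)/2) * σ t) • r t := by
      intro t ht
      unfold crossODESol
      rw [show (bvec t ⬝ᵥ crossProduct (deriv bvec t) (deriv (deriv bvec) t)) = T t from rfl,
        hD t ht, smul_smul]
    rcases hG with hGp | hGn
    · left
      intro t ht
      have hσ := hGp t ht
      have hrpow : T t ^ (-(1:ℝ)/2) = (σ t)⁻¹ := by
        rw [hC t ht, ← Real.rpow_natCast (σ t) 2, ← Real.rpow_mul hσ.le]
        norm_num
        rw [Real.rpow_neg_one]
      rw [key t ht, hrpow, inv_mul_cancel₀ (hE t ht), one_smul]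
    · right
      intro t ht
      have hσ := hGn t ht
      have hrpow : T t ^ (-(1:ℝ)/2) = -(σ t)⁻¹ := by
        have h2 : T t = (-σ t) ^ 2 := by rw [hC t ht]; ring
        rw [h2, ← Real.rpow_natCast (-σ t) 2, ← Real.rpow_mul (by linarith)]
        norm_num
        rw [Real.rpow_neg_one, inv_neg]
      rw [key t ht, hrpow]
      rw [neg_mul, inv_mul_cancel₀ (hE t ht)]
      simp
end

section
/- Suppose φ is even with period T, satisfies the multiplication property φ(nz) = R_n(φ(z)) for a family of functions R_n, and 2Nε = MT for integers N ≥ 1, M. Then for each n ≥ 1 the function Φ_n(x,y) = R_{2nN}(x) − R_{2nN}(y) vanishes at every point of the curve C = {(φ(t), φ(t+ε)) : t}, i.e., R_{2nN}(φ(t)) = R_{2nN}(φ(t+ε)) for all t. -/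
theorem eq_apply_add_of_nat_mul_eq_int_mul_period {α β : Type*} [Ring α] {φ : α → β}
    {T ε : α} {R : ℕ → β → β} (hper : Function.Periodic φ T)
    (hmult : ∀ k : ℕ, 1 ≤ k → ∀ z, φ ((k : α) * z) = R k (φ z))
    {k : ℕ} (hk : 1 ≤ k) {m : ℤ} (hkε : (k : α) * ε = m * T) (t : α) :
    R k (φ t) = R k (φ (t + ε)) := by
  rw [← hmult k hk, ← hmult k hk, mul_add, hkε]
  exact (hper.int_mul m _).symm

theorem multiplication_property_gives_solutions_general (φ : ℂ → ℂ) (T ε : ℂ)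
    (R : ℕ → ℂ → ℂ)
    (hper : ∀ z, φ (z + T) = φ z)
    (hmult : ∀ k : ℕ, 1 ≤ k → ∀ z, φ ((k : ℂ) * z) = R k (φ z))
    (N : ℕ) (hN : 1 ≤ N) (M : ℤ) (hcond : 2 * (N : ℂ) * ε = (M : ℂ) * T) :
    ∀ n : ℕ, 1 ≤ n → ∀ t : ℂ, R (2 * n * N) (φ t) = R (2 * n * N) (φ (t + ε)) := by
  intro n hn t
  have hk : 1 ≤ 2 * n * N := Nat.mul_pos (Nat.mul_pos two_pos hn) hN
  have hkε : ((2 * n * N : ℕ) : ℂ) * ε = ((n * M : ℤ) : ℂ) * T := by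
    push_cast
    linear_combination (n : ℂ) * hcond
  exact eq_apply_add_of_nat_mul_eq_int_mul_period hper hmult hk hkε t

/-- If `φ` is even, `T`-periodic, satisfies the multiplication property
`φ(kz) = R_k(φ(z))`, and `2Nε = MT`, then `Φ_n(x,y) = R_{2nN}(x) − R_{2nN}(y)`
vanishes on the curve `{(φ(t), φ(t+ε))}`. -/
theorem multiplication_property_gives_solutions (φ : ℂ → ℂ) (T ε : ℂ)
    (R : ℕ → ℂ → ℂ)
    (heven : ∀ z, φ (-z) = φ z) (hper : ∀ z, φ (z + T) = φ z)
    (hmult : ∀ k : ℕ, 1 ≤ k → ∀ z, φ ((k : ℂ) * z) = R k (φ z))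
    (N : ℕ) (hN : 1 ≤ N) (M : ℤ) (hcond : 2 * (N : ℂ) * ε = (M : ℂ) * T) :
    ∀ n : ℕ, 1 ≤ n → ∀ t : ℂ, R (2 * n * N) (φ t) = R (2 * n * N) (φ (t + ε)) :=
  multiplication_property_gives_solutions_general φ T ε R hper hmult N hN M hcond
end

section
/- Let ε ∈ ℝ with ε/π irrational. If f, g : [−1,1] → ℝ are continuous and f(cos t) + g(cos(t+ε)) = 0 for all t ∈ ℝ, then f and g are constant functions (with f = −g ≡ const). In particular the only solution of the homogeneous Dirichlet problem u = f(x)+g(y), u|_C = 0 on the ellipse C = {(cos t, cos(t+ε))} with continuous f,g is u ≡ 0 up to the trivial constant splitting. -/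
open Set Real Function

/-!
Evaluating the relation at `t` and at `-(t + 2ε)` and using that `cos` is even shows that
`F = f ∘ cos` is `2ε`-periodic; it is also `2π`-periodic. Since `ε / π` is irrational, these two
periods generate a dense subgroup of `ℝ`, so the continuous function `F` is constant, and then so
are `f` and `g` on `[-1, 1] = cos '' ℝ`.
-/

theorem Function.Periodic.of_mem_addSubgroupClosure {α β : Type*} [AddGroup α] {f : α → β}
    {s : Set α} (hs : ∀ c ∈ s, Periodic f c) {c : α} (hc : c ∈ AddSubgroup.closure s) :
    Periodic f c := by
  induction hc using AddSubgroup.closure_induction with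
  | mem c hc => exact hs c hc
  | zero => exact fun x => by rw [add_zero]
  | add a b _ _ ha hb => exact ha.add_period hb
  | neg a _ ha => exact ha.neg

theorem Function.Periodic.eq_const_of_dense {α β : Type*} [AddZeroClass α] [TopologicalSpace α]
    [TopologicalSpace β] [T2Space β] {f : α → β} (hf : Continuous f) {s : Set α} (hs : Dense s)
    (hper : ∀ c ∈ s, Periodic f c) : f = fun _ => f 0 :=
  hf.ext_on hs continuous_const fun c hc => by simpa using hper c hc 0

theorem Function.Periodic.eq_const_of_irrational_div {β : Type*} [TopologicalSpace β] [T2Space β]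
    {f : ℝ → β} (hf : Continuous f) {a b : ℝ} (ha : Periodic f a) (hb : Periodic f b)
    (hab : Irrational (a / b)) : f = fun _ => f 0 :=
  eq_const_of_dense hf (dense_addSubgroupClosure_pair_iff.mpr hab) fun _ =>
    Periodic.of_mem_addSubgroupClosure (by rintro c (rfl | rfl) <;> assumption)

theorem periodic_comp_cos_two_mul {f g : ℝ → ℝ} {ε : ℝ}
    (h : ∀ t : ℝ, f (cos t) + g (cos (t + ε)) = 0) : Periodic (fun t => f (cos t)) (2 * ε) := by
  intro t
  have h' := h (-(t + 2 * ε))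
  rw [cos_neg, show -(t + 2 * ε) + ε = -(t + ε) by ring, cos_neg] at h'
  linarith [h t]

theorem dirichlet_uniqueness_on_ellipse_general (ε : ℝ) (hirr : Irrational (ε / π))
    (f g : ℝ → ℝ) (hf : ContinuousOn f (Icc (-1) 1))
    (h : ∀ t : ℝ, f (cos t) + g (cos (t + ε)) = 0) :
    ∃ c : ℝ, (∀ x ∈ Icc (-1 : ℝ) 1, f x = c) ∧ (∀ y ∈ Icc (-1 : ℝ) 1, g y = -c) := by
  have hF : Continuous fun t => f (cos t) :=
    hf.comp_continuous continuous_cos fun t => ⟨neg_one_le_cos t, cos_le_one t⟩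
  have hirr' : Irrational (2 * ε / (2 * π)) := by rwa [mul_div_mul_left _ _ two_ne_zero]
  have hconst := congrFun <| (periodic_comp_cos_two_mul h).eq_const_of_irrational_div hF
    (cos_periodic.comp f) hirr'
  refine ⟨f (cos 0), fun x hx => ?_, fun y hy => ?_⟩
  · simpa [cos_arccos hx.1 hx.2] using hconst (arccos x)
  · have hy' := h (arccos y - ε)
    rw [sub_add_cancel, cos_arccos hy.1 hy.2, hconst] at hy'
    linarith

/-- If `ε/π` is irrational and continuous `f, g : [−1,1] → ℝ` satisfy
`f(cos t) + g(cos(t+ε)) = 0` for all `t`, then `f` and `g` are constant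
(with `g = −f`). -/
theorem dirichlet_uniqueness_on_ellipse (ε : ℝ) (hirr : Irrational (ε / π))
    (f g : ℝ → ℝ) (hf : ContinuousOn f (Icc (-1) 1))
    (hg : ContinuousOn g (Icc (-1) 1))
    (h : ∀ t : ℝ, f (cos t) + g (cos (t + ε)) = 0) :
    ∃ c : ℝ, (∀ x ∈ Icc (-1 : ℝ) 1, f x = c) ∧ (∀ y ∈ Icc (-1 : ℝ) 1, g y = -c) :=
  dirichlet_uniqueness_on_ellipse_general ε hirr f g hf h
end

section
/- For the Euler–Baxter curve F(x,y) = x²y² + a(x²+y²) + 2bxy + 1 = 0 with real parameters satisfying a > 0 and b² < (a+1)², the real curve is empty: there is no (x,y) ∈ ℝ² with F(x,y) = 0. -/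
/-- For the Euler–Baxter curve with `a > 0` and `b² < (a+1)²`, the real curve
is empty. -/
theorem euler_baxter_curve_empty (a b : ℝ) (ha : 0 < a)
    (hb : b ^ 2 < (a + 1) ^ 2) :
    ∀ x y : ℝ, x ^ 2 * y ^ 2 + a * (x ^ 2 + y ^ 2) + 2 * b * x * y + 1 ≠ 0 := by
  intro x y h
  have hab : |b| < a + 1 := by nlinarith [sq_abs b, abs_nonneg b]
  have h1 : b * (x * y) ≥ -(|b| * |x * y|) := by
    nlinarith [abs_mul b (x*y), neg_abs_le (b * (x*y))]
  have h2 : x ^ 2 + y ^ 2 ≥ 2 * |x * y| := by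
    nlinarith [sq_nonneg (|x| - |y|), abs_mul x y, sq_abs x, sq_abs y]
  have h3 : x ^ 2 * y ^ 2 ≥ |x * y| ^ 2 := by nlinarith [sq_abs (x*y)]
  rcases eq_or_lt_of_le (abs_nonneg (x*y)) with ht | ht
  · have hxy : x * y = 0 := abs_eq_zero.mp ht.symm
    nlinarith [hxy, mul_nonneg ha.le (by positivity : (0:ℝ) ≤ x^2+y^2)]
  · nlinarith [mul_lt_mul_of_pos_left hab ht, mul_le_mul_of_nonneg_left h2 ha.le,
      sq_nonneg (|x*y| - 1)]
end
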